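/- Let d ≥ 2 and let ρ be a positive semidefinite operator on ℂ^d with Tr ρ = 1. Then Tr[(ρ⊗I) P₊ (ρ⊗I) P₋] = 0 if and only if ρ = I/d, where P_± = (I⊗I ± SWAP)/2 are the symmetric and antisymmetric projectors on ℂ^d ⊗ ℂ^d. -/

import Mathlib

/-!
Expanding `P₊ = (1 + S)/2`, `P₋ = (1 - S)/2` and using `(X ⊗ Y) S = S (Y ⊗ X)`, `S² = 1`,
the trace equals `(d Tr ρ² - (Tr ρ)²)/4`. For Hermitian `ρ` with `c = Tr ρ / d`, the quantity
`d Tr ρ² - (Tr ρ)²` is `d Tr[(ρ - c)ᴴ(ρ - c)]`, which vanishes exactly when `ρ = c · I`.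
-/

open Matrix Kronecker
open scoped ComplexOrder

/-- The SWAP operator on ℂ^d ⊗ ℂ^d. -/
noncomputable def swapOp (d : ℕ) : Matrix (Fin d × Fin d) (Fin d × Fin d) ℂ :=
  Matrix.of fun p q => if p.1 = q.2 ∧ p.2 = q.1 then 1 else 0

/-- The projector onto the symmetric subspace. -/
noncomputable def Psym (d : ℕ) : Matrix (Fin d × Fin d) (Fin d × Fin d) ℂ :=
  (1/2 : ℂ) • (1 + swapOp d)

/-- The projector onto the antisymmetric subspace. -/
noncomputable def Pasym (d : ℕ) : Matrix (Fin d × Fin d) (Fin d × Fin d) ℂ :=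
  (1/2 : ℂ) • (1 - swapOp d)

lemma swapOp_apply (d : ℕ) (p q : Fin d × Fin d) :
    swapOp d p q = if p.swap = q then 1 else 0 := by
  simp [swapOp, Prod.ext_iff, and_comm]

lemma mul_swapOp_apply {d : ℕ} (M : Matrix (Fin d × Fin d) (Fin d × Fin d) ℂ)
    (p q : Fin d × Fin d) : (M * swapOp d) p q = M p q.swap := by
  rw [mul_apply, Finset.sum_eq_single q.swap]
  · simp [swapOp_apply]
  · intro r _ hr
    simp [swapOp_apply, Prod.swap_eq_iff_eq_swap, hr]
  · simp

lemma swapOp_mul_apply {d : ℕ} (M : Matrix (Fin d × Fin d) (Fin d × Fin d) ℂ)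
    (p q : Fin d × Fin d) : (swapOp d * M) p q = M p.swap q := by
  rw [mul_apply, Finset.sum_eq_single p.swap]
  · simp [swapOp_apply]
  · intro r _ hr
    simp [swapOp_apply, Ne.symm hr]
  · simp

lemma swapOp_mul_swapOp (d : ℕ) : swapOp d * swapOp d = 1 := by
  ext p q
  simp [mul_swapOp_apply, swapOp_apply, one_apply]

lemma kronecker_mul_swapOp {d : ℕ} (X Y : Matrix (Fin d) (Fin d) ℂ) :
    (X ⊗ₖ Y) * swapOp d = swapOp d * (Y ⊗ₖ X) := by
  ext p q
  simp [mul_swapOp_apply, swapOp_mul_apply, mul_comm]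

lemma trace_kronecker_one_mul_Psym_mul_kronecker_one_mul_Pasym {d : ℕ}
    (ρ : Matrix (Fin d) (Fin d) ℂ) :
    ((ρ ⊗ₖ (1 : Matrix (Fin d) (Fin d) ℂ)) * Psym d
        * (ρ ⊗ₖ (1 : Matrix (Fin d) (Fin d) ℂ)) * Pasym d).trace
      = ((d : ℂ) * (ρ * ρ).trace - ρ.trace ^ 2) / 4 := by
  set A := ρ ⊗ₖ (1 : Matrix (Fin d) (Fin d) ℂ)
  set S := swapOp d
  have hexp : A * Psym d * A * Pasym d
      = (1 / 4 : ℂ) • (A * A + A * S * A - A * A * S - A * S * A * S) := by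
    have : A * (1 + S) * A * (1 - S) = A * A + A * S * A - A * A * S - A * S * A * S := by
      noncomm_ring
    rw [Psym, Pasym, Matrix.mul_smul, Matrix.mul_smul, Matrix.smul_mul, Matrix.smul_mul,
      smul_smul, this]
    norm_num
  have hAA : A * A = (ρ * ρ) ⊗ₖ (1 : Matrix (Fin d) (Fin d) ℂ) := by
    rw [← mul_kronecker_mul, mul_one]
  -- Moving S across the middle factor swaps the tensor legs of ρ ⊗ 1, and S² = 1.
  have hASAS : A * S * A * S = ρ ⊗ₖ ρ := by
    rw [kronecker_mul_swapOp, mul_assoc S, ← mul_kronecker_mul, one_mul, mul_one,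
      mul_assoc, kronecker_mul_swapOp, ← mul_assoc, swapOp_mul_swapOp, one_mul]
  have hcyc : (A * S * A).trace = (A * A * S).trace := by
    rw [trace_mul_comm (A * S) A, ← mul_assoc]
  rw [hexp, trace_smul, trace_sub, trace_sub, trace_add, hcyc, hASAS, hAA, trace_kronecker,
    trace_kronecker, trace_one, Fintype.card_fin, smul_eq_mul]
  ring

namespace Matrix.IsHermitian

variable {𝕜 n : Type*} [RCLike 𝕜] [Fintype n] [DecidableEq n]

lemma card_mul_trace_mul_self_sub_sq_trace {A : Matrix n n 𝕜} (hA : A.IsHermitian)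
    [Nonempty n] :
    (Fintype.card n : 𝕜) * (A * A).trace - A.trace ^ 2
      = (Fintype.card n : 𝕜) * ((A - (A.trace / Fintype.card n) • 1)ᴴ
          * (A - (A.trace / Fintype.card n) • 1)).trace := by
  have hN : (Fintype.card n : 𝕜) ≠ 0 := Nat.cast_ne_zero.mpr Fintype.card_ne_zero
  have htr : star A.trace = A.trace := by rw [← trace_conjTranspose, hA.eq]
  rw [conjTranspose_sub, hA.eq, conjTranspose_smul, conjTranspose_one, star_div₀, htr,
    star_natCast]
  simp only [sub_mul, mul_sub, Matrix.smul_mul, Matrix.mul_smul, one_mul, mul_one, smul_smul,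
    trace_sub, trace_smul, trace_one, smul_eq_mul]
  field_simp
  ring

lemma card_mul_trace_mul_self_eq_sq_trace_iff {A : Matrix n n 𝕜} (hA : A.IsHermitian) :
    (Fintype.card n : 𝕜) * (A * A).trace = A.trace ^ 2
      ↔ A = (A.trace / Fintype.card n) • 1 := by
  cases isEmpty_or_nonempty n
  · exact iff_of_true (by simp) (Subsingleton.elim _ _)
  have hN : (Fintype.card n : 𝕜) ≠ 0 := Nat.cast_ne_zero.mpr Fintype.card_ne_zero
  rw [← sub_eq_zero, hA.card_mul_trace_mul_self_sub_sq_trace, mul_eq_zero, or_iff_right hN,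
    trace_conjTranspose_mul_self_eq_zero_iff, sub_eq_zero]

end Matrix.IsHermitian

theorem stmt8_general {d : ℕ} (ρ : Matrix (Fin d) (Fin d) ℂ)
    (hρ : ρ.PosSemidef) (htr : ρ.trace = 1) :
    ((ρ ⊗ₖ (1 : Matrix (Fin d) (Fin d) ℂ)) * Psym d
        * (ρ ⊗ₖ (1 : Matrix (Fin d) (Fin d) ℂ)) * Pasym d).trace = 0
      ↔ ρ = ((d : ℂ))⁻¹ • (1 : Matrix (Fin d) (Fin d) ℂ) := by
  have h := hρ.isHermitian.card_mul_trace_mul_self_eq_sq_trace_iff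
  rw [Fintype.card_fin, htr, one_div] at h
  rw [trace_kronecker_one_mul_Psym_mul_kronecker_one_mul_Pasym, htr, div_eq_zero_iff,
    or_iff_left four_ne_zero, sub_eq_zero, h]

/-- For a density matrix ρ on ℂ^d (d ≥ 2), Tr[(ρ⊗I) P₊ (ρ⊗I) P₋] = 0 iff ρ = I/d. -/
theorem stmt8 {d : ℕ} (hd : 2 ≤ d) (ρ : Matrix (Fin d) (Fin d) ℂ)
    (hρ : ρ.PosSemidef) (htr : ρ.trace = 1) :
    ((ρ ⊗ₖ (1 : Matrix (Fin d) (Fin d) ℂ)) * Psym d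
        * (ρ ⊗ₖ (1 : Matrix (Fin d) (Fin d) ℂ)) * Pasym d).trace = 0
      ↔ ρ = ((d : ℂ))⁻¹ • (1 : Matrix (Fin d) (Fin d) ℂ) :=
  stmt8_general ρ hρ htr
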